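/- Let X_1, X_2, ... be an i.i.d. sequence of real-valued random variables with common distribution function F, and let F_n denote the empirical distribution function of the first n observations. Fix p ∈ (0,1) and suppose lq_F(p) < rq_F(p). Then almost surely, for every ε > 0 there exists N such that for all n > N, both lq_{F_n}(p) and rq_{F_n}(p) lie in the set (lq_F(p) − ε, lq_F(p)] ∪ [rq_F(p), rq_F(p) + ε). -/

import Mathlib

/-!
Write `a = lq F p` and `b = rq F p`. The distribution function is `< p` left of `a`, `≥ p` at `a`
(right continuity) and `≤ p` left of `b`, so the law of `X 0` puts no mass on `(a, b)`. Almost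
surely no observation falls in `(a, b)`, hence every `F_n` is constant on `[a, b)`, and the level
set `{F_n ≥ p}` (or `{F_n > p}`) either contains `a` or misses `[a, b)`: neither sample quantile
lies in `(a, b)`. For rationals `r ∈ (a - ε, a)` and `s ∈ (b, b + ε)` we have `F r < p < F s`, so
by the strong law at rational points, eventually `F_n r < p < F_n s`, which confines both sample
quantiles to `[r, s]`.
-/

open MeasureTheory ProbabilityTheory Filter

/-- Left quantile of a distribution function `F` at level `p`:
`lq F p = inf {x | F x ≥ p}`. -/
noncomputable def lq (F : ℝ → ℝ) (p : ℝ) : ℝ := sInf {x : ℝ | p ≤ F x}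

/-- Right quantile of a distribution function `F` at level `p`:
`rq F p = inf {x | F x > p}`. -/
noncomputable def rq (F : ℝ → ℝ) (p : ℝ) : ℝ := sInf {x : ℝ | p < F x}

/-- Empirical distribution function of the first `n` observations `X 0, ..., X (n-1)`:
`edf X n ω x = (1/n) * #{i < n | X i ω ≤ x}`. -/
noncomputable def edf {Ω : Type*} (X : ℕ → Ω → ℝ) (n : ℕ) (ω : Ω) (x : ℝ) : ℝ :=
  ((Finset.range n).filter (fun i => X i ω ≤ x)).card / n

open Set Topology Function

section UpperSet

variable {α : Type*} [ConditionallyCompleteLinearOrder α] {S : Set α} {a b r s x : α}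

lemma IsUpperSet.mem_lowerBounds_of_notMem (hS : IsUpperSet S) (hr : r ∉ S) :
    r ∈ lowerBounds S :=
  fun _ hx => le_of_not_ge fun hxr => hr (hS hxr hx)

lemma IsUpperSet.mem_of_csInf_lt (hS : IsUpperSet S) (hne : S.Nonempty) (hx : sInf S < x) :
    x ∈ S :=
  let ⟨_, ht, htx⟩ := exists_lt_of_csInf_lt hne hx
  hS htx.le ht

lemma IsUpperSet.csInf_mem_Icc_union_Icc (hS : IsUpperSet S) (hr : r ∉ S) (hs : s ∈ S)
    (hgap : ∀ x ∈ Ico a b, x ∈ S → a ∈ S) : sInf S ∈ Icc r a ∪ Icc b s := by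
  have hlow := hS.mem_lowerBounds_of_notMem hr
  have hle_s : sInf S ≤ s := csInf_le ⟨r, hlow⟩ hs
  by_cases ha : a ∈ S
  · exact Or.inl ⟨le_csInf ⟨s, hs⟩ hlow, csInf_le ⟨r, hlow⟩ ha⟩
  · refine Or.inr ⟨le_csInf ⟨s, hs⟩ fun x hx => le_of_not_gt fun hxb => ha ?_, hle_s⟩
    rcases le_or_gt x a with hxa | hax
    · exact hS hxa hx
    · exact hgap x ⟨hax.le, hxb⟩ hx

end UpperSet

section Quantile

variable {G : ℝ → ℝ} {p r s x a b : ℝ}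

lemma Monotone.isUpperSet_setOf_le (hG : Monotone G) : IsUpperSet {x | p ≤ G x} :=
  fun _ _ hxy hx => hx.trans (hG hxy)

lemma Monotone.isUpperSet_setOf_lt (hG : Monotone G) : IsUpperSet {x | p < G x} :=
  fun _ _ hxy hx => hx.trans_le (hG hxy)

lemma apply_lt_of_lt_lq (hG : Monotone G) (hr : G r < p) (hx : x < lq G p) : G x < p :=
  not_le.1 <| notMem_of_lt_csInf (s := {x | p ≤ G x}) hx
    ⟨r, hG.isUpperSet_setOf_le.mem_lowerBounds_of_notMem hr.not_ge⟩

lemma apply_le_of_lt_rq (hG : Monotone G) (hr : G r < p) (hx : x < rq G p) : G x ≤ p :=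
  not_lt.1 <| notMem_of_lt_csInf (s := {x | p < G x}) hx
    ⟨r, hG.isUpperSet_setOf_lt.mem_lowerBounds_of_notMem hr.le.not_gt⟩

lemma le_apply_of_lq_lt (hG : Monotone G) (hs : p < G s) (hx : lq G p < x) : p ≤ G x :=
  hG.isUpperSet_setOf_le.mem_of_csInf_lt ⟨s, hs.le⟩ hx

lemma lt_apply_of_rq_lt (hG : Monotone G) (hs : p < G s) (hx : rq G p < x) : p < G x :=
  hG.isUpperSet_setOf_lt.mem_of_csInf_lt ⟨s, hs⟩ hx

lemma lq_mem_Icc_union_Icc (hG : Monotone G) (hr : G r < p) (hs : p < G s)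
    (hconst : ∀ x ∈ Ico a b, G x = G a) : lq G p ∈ Icc r a ∪ Icc b s :=
  hG.isUpperSet_setOf_le.csInf_mem_Icc_union_Icc hr.not_ge hs.le
    fun x hx hpx => show p ≤ G a from hconst x hx ▸ hpx

lemma rq_mem_Icc_union_Icc (hG : Monotone G) (hr : G r < p) (hs : p < G s)
    (hconst : ∀ x ∈ Ico a b, G x = G a) : rq G p ∈ Icc r a ∪ Icc b s :=
  hG.isUpperSet_setOf_lt.csInf_mem_Icc_union_Icc hr.le.not_gt hs
    fun x hx hpx => show p < G a from hconst x hx ▸ hpx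

lemma StieltjesFunction.measure_Ioo_lq_rq (f : StieltjesFunction ℝ) (hr : f r < p)
    (hs : p < f s) : f.measure (Ioo (lq f p) (rq f p)) = 0 := by
  rw [f.measure_Ioo, ENNReal.ofReal_eq_zero, sub_nonpos]
  calc leftLim f (rq f p) ≤ p :=
        le_of_tendsto (f.mono.tendsto_leftLim _)
          (eventually_nhdsWithin_of_forall fun _ hx => apply_le_of_lt_rq f.mono hr hx)
    _ ≤ f (lq f p) :=
        ge_of_tendsto ((f.right_continuous _).mono Ioi_subset_Ici_self)
          (eventually_nhdsWithin_of_forall fun _ hx => le_apply_of_lq_lt f.mono hs hx)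

end Quantile

lemma eventually_lq_rq_mem_of_tendsto {F : ℝ → ℝ} {G : ℕ → ℝ → ℝ} {p r₀ s₀ ε : ℝ}
    (hF : Monotone F) (hr₀ : F r₀ < p) (hs₀ : p < F s₀) (hG : ∀ n, Monotone (G n))
    (hconv : ∀ q : ℚ, Tendsto (fun n => G n q) atTop (𝓝 (F q)))
    (hconst : ∀ n, ∀ x ∈ Ico (lq F p) (rq F p), G n x = G n (lq F p)) (hε : 0 < ε) :
    ∀ᶠ n in atTop,
      lq (G n) p ∈ Ioc (lq F p - ε) (lq F p) ∪ Ico (rq F p) (rq F p + ε) ∧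
      rq (G n) p ∈ Ioc (lq F p - ε) (lq F p) ∪ Ico (rq F p) (rq F p + ε) := by
  obtain ⟨r, hr, hr'⟩ := exists_rat_btwn (sub_lt_self (lq F p) hε)
  obtain ⟨s, hs, hs'⟩ := exists_rat_btwn (lt_add_of_pos_right (rq F p) hε)
  have hsub : Icc (r : ℝ) (lq F p) ∪ Icc (rq F p) s ⊆
      Ioc (lq F p - ε) (lq F p) ∪ Ico (rq F p) (rq F p + ε) :=
    union_subset_union (fun x hx => ⟨hr.trans_le hx.1, hx.2⟩) (Icc_subset_Ico_right hs')
  filter_upwards [(hconv r).eventually_lt_const (apply_lt_of_lt_lq hF hr₀ hr'),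
    (hconv s).eventually_const_lt (lt_apply_of_rq_lt hF hs₀ hs)] with n hGr hGs
  exact ⟨hsub (lq_mem_Icc_union_Icc (hG n) hGr hGs (hconst n)),
    hsub (rq_mem_Icc_union_Icc (hG n) hGr hGs (hconst n))⟩

section Empirical

variable {Ω : Type*} {X : ℕ → Ω → ℝ} {n : ℕ} {ω : Ω} {a b x : ℝ}

lemma edf_mono : Monotone (edf X n ω) := fun _ _ hxy => by
  unfold edf
  gcongr

lemma edf_eq_of_forall_notMem_Ioo (hgap : ∀ i, X i ω ∉ Ioo a b) (hx : x ∈ Ico a b) :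
    edf X n ω x = edf X n ω a := by
  unfold edf
  congr 3
  exact Finset.filter_congr fun i _ =>
    ⟨fun hi => le_of_not_gt fun hai => hgap i ⟨hai, hi.trans_lt hx.2⟩, fun hi => hi.trans hx.1⟩

lemma edf_eq_sum_indicator :
    edf X n ω x = (∑ i ∈ Finset.range n, (Iic x).indicator 1 (X i ω)) / n := by
  simp only [edf, Finset.card_filter, Nat.cast_sum, indicator_apply, mem_Iic, Pi.one_apply,
    Nat.cast_ite, Nat.cast_one, Nat.cast_zero]

variable [MeasurableSpace Ω] {μ : Measure Ω}

lemma ae_tendsto_edf [IsFiniteMeasure μ] (hindep : Pairwise fun i j => X i ⟂ᵢ[μ] X j)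
    (hident : ∀ i, IdentDistrib (X i) (X 0) μ μ) (x : ℝ) :
    ∀ᵐ ω ∂μ, Tendsto (fun n => edf X n ω x) atTop (𝓝 ((μ.map (X 0)).real (Iic x))) := by
  set g : ℝ → ℝ := (Iic x).indicator 1
  have hg : Measurable g := measurable_one.indicator measurableSet_Iic
  have hX0 : AEMeasurable (X 0) μ := (hident 0).aemeasurable_fst
  have hmean : μ[g ∘ X 0] = (μ.map (X 0)).real (Iic x) := by
    change ∫ ω, g (X 0 ω) ∂μ = _
    rw [← integral_map hX0 hg.aestronglyMeasurable, integral_indicator_one measurableSet_Iic]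
  have hint : Integrable (g ∘ X 0) μ :=
    ((integrable_const 1).indicator measurableSet_Iic).comp_aemeasurable hX0
  have := strong_law_ae_real (fun i => g ∘ X i) hint
    (fun i j hij => (hindep hij).comp hg hg) (fun i => (hident i).comp hg)
  rw [hmean] at this
  filter_upwards [this] with ω hω
  exact hω.congr fun n => edf_eq_sum_indicator.symm

lemma ae_forall_notMem_of_map_eq_zero {γ : Type*} [MeasurableSpace γ] {Y : ℕ → Ω → γ}
    (hident : ∀ i, IdentDistrib (Y i) (Y 0) μ μ) {t : Set γ} (ht : MeasurableSet t)
    (h0 : μ.map (Y 0) t = 0) : ∀ᵐ ω ∂μ, ∀ i, Y i ω ∉ t :=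
  ae_all_iff.2 fun i => measure_eq_zero_iff_ae_notMem.1 <| show μ (Y i ⁻¹' t) = 0 by
    rwa [(hident i).measure_mem_eq ht, ← Measure.map_apply_of_aemeasurable
      (hident 0).aemeasurable_fst ht]

end Empirical

theorem sample_quantiles_eventually_near_lq_or_rq_general
    {Ω : Type*} [MeasurableSpace Ω] (μ : Measure Ω) [IsProbabilityMeasure μ]
    (X : ℕ → Ω → ℝ)
    (hindep : iIndepFun (m := fun _ => Real.measurableSpace) X μ)
    (hident : ∀ i, IdentDistrib (X i) (X 0) μ μ)
    (F : ℝ → ℝ) (hF : ∀ x, F x = (μ {ω | X 0 ω ≤ x}).toReal)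
    (p : ℝ) (hp : p ∈ Set.Ioo (0 : ℝ) 1) :
    ∀ᵐ ω ∂μ, ∀ ε > (0 : ℝ), ∃ N : ℕ, ∀ n > N,
      lq (edf X n ω) p ∈
        Set.Ioc (lq F p - ε) (lq F p) ∪ Set.Ico (rq F p) (rq F p + ε) ∧
      rq (edf X n ω) p ∈
        Set.Ioc (lq F p - ε) (lq F p) ∪ Set.Ico (rq F p) (rq F p + ε) := by
  set ν := μ.map (X 0)
  have hX0 : AEMeasurable (X 0) μ := (hident 0).aemeasurable_fst
  have : IsProbabilityMeasure ν := Measure.isProbabilityMeasure_map hX0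
  obtain rfl : F = cdf ν := funext fun x => by
    rw [hF, cdf_eq_real, measureReal_def, Measure.map_apply_of_aemeasurable hX0 measurableSet_Iic]
    rfl
  obtain ⟨r₀, hr₀⟩ := ((tendsto_cdf_atBot ν).eventually_lt_const hp.1).exists
  obtain ⟨s₀, hs₀⟩ := ((tendsto_cdf_atTop ν).eventually_const_lt hp.2).exists
  have hν_gap : ν (Ioo (lq (cdf ν) p) (rq (cdf ν) p)) = 0 := by
    simpa only [measure_cdf] using (cdf ν).measure_Ioo_lq_rq hr₀ hs₀
  have hgap : ∀ᵐ ω ∂μ, ∀ i, X i ω ∉ Ioo (lq (cdf ν) p) (rq (cdf ν) p) :=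
    ae_forall_notMem_of_map_eq_zero hident measurableSet_Ioo hν_gap
  have hconv : ∀ᵐ ω ∂μ, ∀ q : ℚ, Tendsto (fun n => edf X n ω q) atTop (𝓝 (cdf ν q)) :=
    ae_all_iff.2 fun q => by
      simpa only [cdf_eq_real] using ae_tendsto_edf (fun i j hij => hindep.indepFun hij) hident q
  filter_upwards [hgap, hconv] with ω hωgap hωconv ε hε
  obtain ⟨N, hN⟩ := eventually_atTop.1 <| eventually_lq_rq_mem_of_tendsto (cdf ν).mono hr₀ hs₀
    (fun _ => edf_mono) hωconv (fun _ _ hx => edf_eq_of_forall_notMem_Ioo hωgap hx) hε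
  exact ⟨N, fun n hn => hN n hn.le⟩

/-- If `lq F p < rq F p`, then almost surely, for every `ε > 0`, eventually both
sample quantiles lie in `(lq F p - ε, lq F p] ∪ [rq F p, rq F p + ε)`. -/
theorem sample_quantiles_eventually_near_lq_or_rq
    {Ω : Type*} [MeasurableSpace Ω] (μ : Measure Ω) [IsProbabilityMeasure μ]
    (X : ℕ → Ω → ℝ) (hmeas : ∀ i, Measurable (X i))
    (hindep : iIndepFun (m := fun _ => Real.measurableSpace) X μ)
    (hident : ∀ i, IdentDistrib (X i) (X 0) μ μ)
    (F : ℝ → ℝ) (hF : ∀ x, F x = (μ {ω | X 0 ω ≤ x}).toReal)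
    (p : ℝ) (hp : p ∈ Set.Ioo (0 : ℝ) 1)
    (hlt : lq F p < rq F p) :
    ∀ᵐ ω ∂μ, ∀ ε > (0 : ℝ), ∃ N : ℕ, ∀ n > N,
      lq (edf X n ω) p ∈
        Set.Ioc (lq F p - ε) (lq F p) ∪ Set.Ico (rq F p) (rq F p + ε) ∧
      rq (edf X n ω) p ∈
        Set.Ioc (lq F p - ε) (lq F p) ∪ Set.Ico (rq F p) (rq F p + ε) :=
  sample_quantiles_eventually_near_lq_or_rq_general μ X hindep hident F hF p hp
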